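/- arXiv:2309.16091 — 3 statements merged into one kernel-verified Lean document; each statement's English description precedes it below -/
import Mathlib

section
/- Let s be a 4×4 invertible complex matrix satisfying s⁻¹ = s†. Write s in block form with scalar (1,1)-entry s₁₁, 1×3 block b, 3×1 block c, and 3×3 block a. Then s₁₁ = det(a†) and c = -adj(a†) b†, where adj denotes the classical adjugate, provided det s = 1. -/
open Matrix Complex

noncomputable section

abbrev e4aux : (Fin 1 ⊕ Fin 3) ≃ Fin 4 := finSumFinEquiv

lemma fin3_mk2_aux (h : 2 < 3) : (⟨2, h⟩ : Fin 3) = 2 := rfl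
lemma fin1_eq_aux (x : Fin 1) : x = 0 := Subsingleton.elim _ _

lemma adj_blocks_inl_inl (α : Matrix (Fin 1) (Fin 1) ℂ) (b : Matrix (Fin 1) (Fin 3) ℂ)
    (c : Matrix (Fin 3) (Fin 1) ℂ) (a : Matrix (Fin 3) (Fin 3) ℂ) :
    (fromBlocks α b c a).adjugate (Sum.inl 0) (Sum.inl 0) = a.det := by
  have h := adjugate_submatrix_equiv_self e4aux ((fromBlocks α b c a).submatrix e4aux.symm e4aux.symm)
  simp only [Matrix.submatrix_submatrix, Equiv.symm_comp_self, Matrix.submatrix_id_id] at h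
  have h2 := congrFun (congrFun h (Sum.inl 0)) (Sum.inl 0)
  rw [h2]
  simp only [Matrix.submatrix_apply]
  rw [adjugate_fin_succ_eq_det_submatrix]
  rw [Matrix.det_fin_three, Matrix.det_fin_three]
  norm_num [Matrix.submatrix_apply, Fin.succAbove, Fin.lt_def, Fin.addCases, finSumFinEquiv,
    fromBlocks, Fin.subNat, Fin.succ]
  rfl

lemma adj_blocks_inl_inr (α : Matrix (Fin 1) (Fin 1) ℂ) (b : Matrix (Fin 1) (Fin 3) ℂ)
    (c : Matrix (Fin 3) (Fin 1) ℂ) (a : Matrix (Fin 3) (Fin 3) ℂ) (i : Fin 3) :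
    (fromBlocks α b c a).adjugate (Sum.inl 0) (Sum.inr i) = -(b * a.adjugate) 0 i := by
  have h := adjugate_submatrix_equiv_self e4aux ((fromBlocks α b c a).submatrix e4aux.symm e4aux.symm)
  simp only [Matrix.submatrix_submatrix, Equiv.symm_comp_self, Matrix.submatrix_id_id] at h
  have h2 := congrFun (congrFun h (Sum.inl 0)) (Sum.inr i)
  rw [h2]
  simp only [Matrix.submatrix_apply]
  rw [adjugate_fin_succ_eq_det_submatrix]
  rw [Matrix.det_fin_three]
  rw [Matrix.mul_apply, Matrix.adjugate_fin_three, Fin.sum_univ_three]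
  fin_cases i <;>
    norm_num [Matrix.submatrix_apply, Fin.succAbove, Fin.lt_def, Fin.addCases, finSumFinEquiv,
      fromBlocks, Fin.subNat, Fin.succ] <;>
    simp <;> ring

/-- If s is a 4×4 matrix with s⁻¹ = s†, det s = 1, written in block
form with scalar (1,1)-entry s₁₁, 1×3 block b, 3×1 block c and 3×3 block a,
then s₁₁ = det(a†) and c = -adj(a†) b†. -/
theorem stmt2 (s₁₁ : Matrix (Fin 1) (Fin 1) ℂ) (b : Matrix (Fin 1) (Fin 3) ℂ)
    (c : Matrix (Fin 3) (Fin 1) ℂ) (a : Matrix (Fin 3) (Fin 3) ℂ)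
    (s : Matrix (Fin 1 ⊕ Fin 3) (Fin 1 ⊕ Fin 3) ℂ)
    (hs : s = fromBlocks s₁₁ b c a)
    (hunit : s⁻¹ = sᴴ)
    (hdet : s.det = 1) :
    s₁₁ 0 0 = (aᴴ).det ∧ c = -((aᴴ).adjugate * bᴴ) := by
  subst hs
  have hadj : (fromBlocks s₁₁ b c a)ᴴ = (fromBlocks s₁₁ b c a).adjugate := by
    rw [← hunit, Matrix.inv_def, hdet, Ring.inverse_one, one_smul]
  constructor
  · have h00 := congrFun (congrFun hadj (Sum.inl 0)) (Sum.inl 0)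
    rw [Matrix.conjTranspose_apply, adj_blocks_inl_inl] at h00
    simp only [Matrix.fromBlocks_apply₁₁] at h00
    rw [Matrix.det_conjTranspose, ← h00, star_star]
  · ext i j
    have hci := congrFun (congrFun hadj (Sum.inl 0)) (Sum.inr i)
    rw [Matrix.conjTranspose_apply, adj_blocks_inl_inr] at hci
    simp only [Matrix.fromBlocks_apply₂₁] at hci
    have hj : j = 0 := Subsingleton.elim _ _
    subst hj
    have : c i 0 = star (-(b * a.adjugate) 0 i) := by rw [← hci, star_star]
    rw [this]
    rw [← Matrix.adjugate_conjTranspose, ← Matrix.conjTranspose_mul, star_neg]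
    simp only [Matrix.neg_apply, Matrix.conjTranspose_apply]
end
end

section
/- Let M₁(y) be a smooth function of y ∈ ℝ with values in 4×4 anti-Hermitian matrices (M₁† = -M₁), also satisfying M₁ = -𝒜 M₁* 𝒜 where 𝒜 = diag(1,σ₁). Write M₁ in block form with 1×3 block (M₁)₁₂. Suppose M₁ satisfies 4M₁'' - 4i[σ,M₁]M₁' + 4iM₁'[σ,M₁] - y[σ,M₁]σ + yσ[σ,M₁] = 0 with σ = diag(-1,1,1,1), and that M₁ and its derivatives vanish as y → -∞. Then the block v(y) := (M₁(y))₁₂ satisfies v'' + 8v(v†v) + yv = 0. -/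
open Matrix Complex Filter Topology

lemma const_zero_of_deriv_zero (f : ℝ → ℂ) (hf : Differentiable ℝ f)
    (h' : ∀ x, deriv f x = 0) (h0 : Tendsto f atBot (𝓝 0)) : ∀ x, f x = 0 := by
  intro x
  have hc : ∀ y, f y = f x := fun y => is_const_of_deriv_eq_zero hf h' y x
  have h1 : Tendsto f atBot (𝓝 (f x)) := by
    have : f = fun _ => f x := funext hc
    rw [this]; exact tendsto_const_nhds
  exact tendsto_nhds_unique h1 h0

lemma integrate3 (f u1 u2 u3 g1 g2 g3 : ℝ → ℂ) (c : ℂ)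
    (hf : ContDiff ℝ (⊤ : ℕ∞) f)
    (hu1 : ContDiff ℝ (⊤ : ℕ∞) u1) (hu2 : ContDiff ℝ (⊤ : ℕ∞) u2) (hu3 : ContDiff ℝ (⊤ : ℕ∞) u3)
    (hg1 : ContDiff ℝ (⊤ : ℕ∞) g1) (hg2 : ContDiff ℝ (⊤ : ℕ∞) g2) (hg3 : ContDiff ℝ (⊤ : ℕ∞) g3)
    (hode : ∀ t, deriv (deriv f) t =
      c * (deriv u1 t * g1 t + u1 t * deriv g1 t + deriv u2 t * g2 t + u2 t * deriv g2 t
        + deriv u3 t * g3 t + u3 t * deriv g3 t))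
    (hdf : Tendsto (deriv f) atBot (𝓝 0))
    (tu1 : Tendsto u1 atBot (𝓝 0)) (tu2 : Tendsto u2 atBot (𝓝 0)) (tu3 : Tendsto u3 atBot (𝓝 0))
    (tg1 : Tendsto g1 atBot (𝓝 0)) (tg2 : Tendsto g2 atBot (𝓝 0)) (tg3 : Tendsto g3 atBot (𝓝 0)) :
    ∀ t, deriv f t = c * (u1 t * g1 t + u2 t * g2 t + u3 t * g3 t) := by
  have hf' : ContDiff ℝ ((⊤:ℕ∞):WithTop ℕ∞) f := hf.of_le (by simp)
  have hu1' := hu1.of_le ((by simp) : ((1:ℕ):WithTop ℕ∞) ≤ ((⊤:ℕ∞):WithTop ℕ∞))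
  have hu2' := hu2.of_le ((by simp) : ((1:ℕ):WithTop ℕ∞) ≤ ((⊤:ℕ∞):WithTop ℕ∞))
  have hu3' := hu3.of_le ((by simp) : ((1:ℕ):WithTop ℕ∞) ≤ ((⊤:ℕ∞):WithTop ℕ∞))
  have hg1' := hg1.of_le ((by simp) : ((1:ℕ):WithTop ℕ∞) ≤ ((⊤:ℕ∞):WithTop ℕ∞))
  have hg2' := hg2.of_le ((by simp) : ((1:ℕ):WithTop ℕ∞) ≤ ((⊤:ℕ∞):WithTop ℕ∞))
  have hg3' := hg3.of_le ((by simp) : ((1:ℕ):WithTop ℕ∞) ≤ ((⊤:ℕ∞):WithTop ℕ∞))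
  have hdf' : ContDiff ℝ ((⊤:ℕ∞):WithTop ℕ∞) (deriv f) := (contDiff_infty_iff_deriv.1 hf').2
  set F : ℝ → ℂ := fun t => deriv f t - c * (u1 t * g1 t + u2 t * g2 t + u3 t * g3 t) with hFdef
  have hF : ∀ t, HasDerivAt F 0 t := by
    intro t
    have h1 : HasDerivAt (deriv f) (deriv (deriv f) t) t :=
      (hdf'.differentiable (by simp) t).hasDerivAt
    have d1 : HasDerivAt u1 (deriv u1 t) t := (hu1'.differentiable (by simp) t).hasDerivAt
    have d2 : HasDerivAt u2 (deriv u2 t) t := (hu2'.differentiable (by simp) t).hasDerivAt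
    have d3 : HasDerivAt u3 (deriv u3 t) t := (hu3'.differentiable (by simp) t).hasDerivAt
    have e1 : HasDerivAt g1 (deriv g1 t) t := (hg1'.differentiable (by simp) t).hasDerivAt
    have e2 : HasDerivAt g2 (deriv g2 t) t := (hg2'.differentiable (by simp) t).hasDerivAt
    have e3 : HasDerivAt g3 (deriv g3 t) t := (hg3'.differentiable (by simp) t).hasDerivAt
    have hsum := (((d1.mul e1).add (d2.mul e2)).add (d3.mul e3)).const_mul c
    have := h1.sub hsum
    have h0 : deriv (deriv f) t -
        c * (deriv u1 t * g1 t + u1 t * deriv g1 t + (deriv u2 t * g2 t + u2 t * deriv g2 t) +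
          (deriv u3 t * g3 t + u3 t * deriv g3 t)) = 0 := by
      rw [hode t]; ring
    rw [h0] at this; exact this
  have hFz : ∀ t, F t = 0 :=
    const_zero_of_deriv_zero F (fun t => (hF t).differentiableAt)
      (fun t => (hF t).deriv) (by
        have : Tendsto (fun t => deriv f t - c * (u1 t * g1 t + u2 t * g2 t + u3 t * g3 t))
            atBot (𝓝 (0 - c * (0*0 + 0*0 + 0*0))) :=
          hdf.sub ((((tu1.mul tg1).add (tu2.mul tg2)).add (tu3.mul tg3)).const_mul c)
        simpa using this)
  intro t
  have := hFz t
  simp only [hFdef] at this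
  linear_combination this

noncomputable section

set_option maxHeartbeats 1000000 in
/-- If the anti-Hermitian matrix function M₁ with the symmetry
M₁ = -𝒜 M₁* 𝒜 satisfies 4M₁'' - 4i[σ,M₁]M₁' + 4iM₁'[σ,M₁] - y[σ,M₁]σ + yσ[σ,M₁] = 0
and decays (with its derivative) as y → -∞, then v = (M₁)₁₂ satisfies
v'' + 8v(v†v) + yv = 0. -/
theorem stmt14
    (σ : Matrix (Fin 1 ⊕ Fin 3) (Fin 1 ⊕ Fin 3) ℂ)
    (hσ : σ = fromBlocks (-1) 0 0 1)
    (σ₁ : Matrix (Fin 3) (Fin 3) ℂ)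
    (hσ₁ : σ₁ = !![0,1,0; 1,0,0; 0,0,1])
    (𝒜 : Matrix (Fin 1 ⊕ Fin 3) (Fin 1 ⊕ Fin 3) ℂ)
    (h𝒜 : 𝒜 = fromBlocks 1 0 0 σ₁)
    (M₁ : ℝ → Matrix (Fin 1 ⊕ Fin 3) (Fin 1 ⊕ Fin 3) ℂ)
    (hsmooth : ∀ i j, ContDiff ℝ (⊤ : ℕ∞) (fun y => M₁ y i j))
    (hanti : ∀ y : ℝ, (M₁ y)ᴴ = -(M₁ y))
    (hsym : ∀ y : ℝ, M₁ y = -(𝒜 * (M₁ y).map (starRingEnd ℂ) * 𝒜))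
    (D1 D2 : ℝ → Matrix (Fin 1 ⊕ Fin 3) (Fin 1 ⊕ Fin 3) ℂ)
    (hD1 : ∀ y, D1 y = Matrix.of fun i j => deriv (fun t => M₁ t i j) y)
    (hD2 : ∀ y, D2 y = Matrix.of fun i j => deriv (deriv (fun t => M₁ t i j)) y)
    (hODE : ∀ y : ℝ,
      (4 : ℂ) • D2 y
        - (4 * I) • ((σ * M₁ y - M₁ y * σ) * D1 y)
        + (4 * I) • (D1 y * (σ * M₁ y - M₁ y * σ))
        - (y : ℂ) • ((σ * M₁ y - M₁ y * σ) * σ)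
        + (y : ℂ) • (σ * (σ * M₁ y - M₁ y * σ)) = 0)
    (hdecay : ∀ i j, Tendsto (fun y => M₁ y i j) atBot (𝓝 0) ∧
      Tendsto (fun y => deriv (fun t => M₁ t i j) y) atBot (𝓝 0))
    (v : ℝ → Matrix (Fin 1) (Fin 3) ℂ) (hv : ∀ y, v y = (M₁ y).toBlocks₁₂) :
    ∀ y : ℝ, (Matrix.of fun i j => deriv (deriv fun t => v t i j) y)
      + (8 : ℂ) • (v y * ((v y)ᴴ * v y)) + (y : ℂ) • v y = 0 := by
  -- E11 : second derivative of the (1,1) entry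
  have E11 : ∀ t : ℝ, deriv (deriv fun s => M₁ s (Sum.inl 0) (Sum.inl 0)) t =
      (-2*I) * (deriv (fun s => M₁ s (Sum.inl 0) (Sum.inr 0)) t * M₁ t (Sum.inr 0) (Sum.inl 0)
        + M₁ t (Sum.inl 0) (Sum.inr 0) * deriv (fun s => M₁ s (Sum.inr 0) (Sum.inl 0)) t
        + deriv (fun s => M₁ s (Sum.inl 0) (Sum.inr 1)) t * M₁ t (Sum.inr 1) (Sum.inl 0)
        + M₁ t (Sum.inl 0) (Sum.inr 1) * deriv (fun s => M₁ s (Sum.inr 1) (Sum.inl 0)) t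
        + deriv (fun s => M₁ s (Sum.inl 0) (Sum.inr 2)) t * M₁ t (Sum.inr 2) (Sum.inl 0)
        + M₁ t (Sum.inl 0) (Sum.inr 2) * deriv (fun s => M₁ s (Sum.inr 2) (Sum.inl 0)) t) := by
    intro t
    have h := congrFun (congrFun (hODE t) (Sum.inl 0)) (Sum.inl 0)
    simp only [hσ, hD1, hD2, Matrix.add_apply, Matrix.sub_apply, Matrix.smul_apply,
      Matrix.mul_apply, Fintype.sum_sum_type, Fin.sum_univ_three, Fin.sum_univ_one,
      fromBlocks_apply₁₁, fromBlocks_apply₁₂, fromBlocks_apply₂₁, fromBlocks_apply₂₂,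
      Matrix.zero_apply, Matrix.one_apply, Matrix.neg_apply, Matrix.of_apply, smul_eq_mul] at h
    norm_num [Fin.ext_iff] at h
    linear_combination (1/4 : ℂ) * h
  -- E22 : second derivative of (2,2)-block entries
  have E22 : ∀ (k l : Fin 3) (t : ℝ), deriv (deriv fun s => M₁ s (Sum.inr k) (Sum.inr l)) t =
      (2*I) * (deriv (fun s => M₁ s (Sum.inr k) (Sum.inl 0)) t * M₁ t (Sum.inl 0) (Sum.inr l)
        + M₁ t (Sum.inr k) (Sum.inl 0) * deriv (fun s => M₁ s (Sum.inl 0) (Sum.inr l)) t) := by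
    intro k l t
    have h := congrFun (congrFun (hODE t) (Sum.inr k)) (Sum.inr l)
    fin_cases k <;> fin_cases l <;>
    · simp only [hσ, hD1, hD2, Matrix.add_apply, Matrix.sub_apply, Matrix.smul_apply,
        Matrix.mul_apply, Fintype.sum_sum_type, Fin.sum_univ_three, Fin.sum_univ_one,
        fromBlocks_apply₁₁, fromBlocks_apply₁₂, fromBlocks_apply₂₁, fromBlocks_apply₂₂,
        Matrix.zero_apply, Matrix.one_apply, Matrix.neg_apply, Matrix.of_apply, smul_eq_mul] at h
      simp only [Fin.zero_eta, Fin.mk_one, Fin.reduceFinMk] at h ⊢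
      norm_num [Fin.ext_iff] at h
      linear_combination (1/4 : ℂ) * h
  -- E12 : the ODE for the (1,2)-block entries
  have E12 : ∀ (j : Fin 3) (t : ℝ),
      (4:ℂ) * deriv (deriv fun s => M₁ s (Sum.inl 0) (Sum.inr j)) t
      + 8*I*( M₁ t (Sum.inl 0) (Sum.inr 0) * deriv (fun s => M₁ s (Sum.inr 0) (Sum.inr j)) t
            + M₁ t (Sum.inl 0) (Sum.inr 1) * deriv (fun s => M₁ s (Sum.inr 1) (Sum.inr j)) t
            + M₁ t (Sum.inl 0) (Sum.inr 2) * deriv (fun s => M₁ s (Sum.inr 2) (Sum.inr j)) t )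
      - 8*I* deriv (fun s => M₁ s (Sum.inl 0) (Sum.inl 0)) t * M₁ t (Sum.inl 0) (Sum.inr j)
      + 4*(t:ℂ)*M₁ t (Sum.inl 0) (Sum.inr j) = 0 := by
    intro j t
    have h := congrFun (congrFun (hODE t) (Sum.inl 0)) (Sum.inr j)
    fin_cases j <;>
    · simp only [hσ, hD1, hD2, Matrix.add_apply, Matrix.sub_apply, Matrix.smul_apply,
        Matrix.mul_apply, Fintype.sum_sum_type, Fin.sum_univ_three, Fin.sum_univ_one,
        fromBlocks_apply₁₁, fromBlocks_apply₁₂, fromBlocks_apply₂₁, fromBlocks_apply₂₂,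
        Matrix.zero_apply, Matrix.one_apply, Matrix.neg_apply, Matrix.of_apply, smul_eq_mul] at h
      simp only [Fin.zero_eta, Fin.mk_one, Fin.reduceFinMk] at h ⊢
      norm_num [Fin.ext_iff] at h
      linear_combination h
  -- integrate the (1,1) equation
  have ha : ∀ t : ℝ, deriv (fun s => M₁ s (Sum.inl 0) (Sum.inl 0)) t =
      (-2*I) * (M₁ t (Sum.inl 0) (Sum.inr 0) * M₁ t (Sum.inr 0) (Sum.inl 0)
        + M₁ t (Sum.inl 0) (Sum.inr 1) * M₁ t (Sum.inr 1) (Sum.inl 0)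
        + M₁ t (Sum.inl 0) (Sum.inr 2) * M₁ t (Sum.inr 2) (Sum.inl 0)) :=
    integrate3 (fun s => M₁ s (Sum.inl 0) (Sum.inl 0))
      (fun s => M₁ s (Sum.inl 0) (Sum.inr 0)) (fun s => M₁ s (Sum.inl 0) (Sum.inr 1))
      (fun s => M₁ s (Sum.inl 0) (Sum.inr 2))
      (fun s => M₁ s (Sum.inr 0) (Sum.inl 0)) (fun s => M₁ s (Sum.inr 1) (Sum.inl 0))
      (fun s => M₁ s (Sum.inr 2) (Sum.inl 0)) (-2*I)
      (hsmooth _ _) (hsmooth _ _) (hsmooth _ _) (hsmooth _ _) (hsmooth _ _) (hsmooth _ _)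
      (hsmooth _ _) E11
      (hdecay (Sum.inl 0) (Sum.inl 0)).2
      (hdecay (Sum.inl 0) (Sum.inr 0)).1 (hdecay (Sum.inl 0) (Sum.inr 1)).1
      (hdecay (Sum.inl 0) (Sum.inr 2)).1
      (hdecay (Sum.inr 0) (Sum.inl 0)).1 (hdecay (Sum.inr 1) (Sum.inl 0)).1
      (hdecay (Sum.inr 2) (Sum.inl 0)).1
  -- integrate the (2,2) equations
  have hd : ∀ (k l : Fin 3) (t : ℝ), deriv (fun s => M₁ s (Sum.inr k) (Sum.inr l)) t =
      (2*I) * (M₁ t (Sum.inr k) (Sum.inl 0) * M₁ t (Sum.inl 0) (Sum.inr l)) := by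
    intro k l t
    have h := integrate3 (fun s => M₁ s (Sum.inr k) (Sum.inr l))
      (fun s => M₁ s (Sum.inr k) (Sum.inl 0)) (fun _ => 0) (fun _ => 0)
      (fun s => M₁ s (Sum.inl 0) (Sum.inr l)) (fun _ => 0) (fun _ => 0) (2*I)
      (hsmooth _ _) (hsmooth _ _) contDiff_const contDiff_const (hsmooth _ _)
      contDiff_const contDiff_const
      (fun t => by simpa using E22 k l t)
      (hdecay (Sum.inr k) (Sum.inr l)).2
      (hdecay (Sum.inr k) (Sum.inl 0)).1 tendsto_const_nhds tendsto_const_nhds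
      (hdecay (Sum.inl 0) (Sum.inr l)).1 tendsto_const_nhds tendsto_const_nhds t
    simpa using h
  -- final assembly
  intro y
  have hconj : ∀ k : Fin 3, star (M₁ y (Sum.inl 0) (Sum.inr k)) = -(M₁ y (Sum.inr k) (Sum.inl 0)) := by
    intro k
    have h := congrFun (congrFun (hanti y) (Sum.inr k)) (Sum.inl 0)
    simpa [Matrix.conjTranspose_apply, Matrix.neg_apply] using h
  ext i j
  have hi : i = 0 := Subsingleton.elim _ _
  subst hi
  have hvfun : ∀ jj : Fin 3, (fun t => v t 0 jj) = fun t => M₁ t (Sum.inl 0) (Sum.inr jj) := by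
    intro jj; funext t; rw [hv t]; rfl
  simp only [Matrix.add_apply, Matrix.smul_apply, Matrix.of_apply, Matrix.zero_apply,
    Matrix.mul_apply, Fin.sum_univ_three, Fin.sum_univ_one, Matrix.conjTranspose_apply,
    hv, Matrix.toBlocks₁₂, smul_eq_mul, hvfun]
  linear_combination (1/4 : ℂ) * E12 j y
    - (2*I*(M₁ y (Sum.inl 0) (Sum.inr 0))) * hd 0 j y
    - (2*I*(M₁ y (Sum.inl 0) (Sum.inr 1))) * hd 1 j y
    - (2*I*(M₁ y (Sum.inl 0) (Sum.inr 2))) * hd 2 j y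
    + (2*I*(M₁ y (Sum.inl 0) (Sum.inr j))) * ha y
    + (8*(M₁ y (Sum.inl 0) (Sum.inr 0))*(M₁ y (Sum.inl 0) (Sum.inr j))) * hconj 0
    + (8*(M₁ y (Sum.inl 0) (Sum.inr 1))*(M₁ y (Sum.inl 0) (Sum.inr j))) * hconj 1
    + (8*(M₁ y (Sum.inl 0) (Sum.inr 2))*(M₁ y (Sum.inl 0) (Sum.inr j))) * hconj 2
    - (8*(M₁ y (Sum.inl 0) (Sum.inr 0) * M₁ y (Sum.inr 0) (Sum.inl 0)
        + M₁ y (Sum.inl 0) (Sum.inr 1) * M₁ y (Sum.inr 1) (Sum.inl 0)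
        + M₁ y (Sum.inl 0) (Sum.inr 2) * M₁ y (Sum.inr 2) (Sum.inl 0))
        * (M₁ y (Sum.inl 0) (Sum.inr j))) * Complex.I_sq
end
end

section
/- Let ρ be a 1×3 complex row vector, ν = (1/(2π))ln(1 + ρρ†) ≥ 0, a = -iν. Then the constant β₁₂ = (Γ(-iν)/√(2π)) e^{iπ/4 - πν/2} ν ρ satisfies β₁₂β₁₂† = ν (using |Γ(-iν)|² = π/(ν sinh(πν))), i.e. the squared norm of the row vector β₁₂ equals ν. -/
open Matrix Complex

noncomputable section

lemma stmt19_aux (p v E : ℝ) (hp : p ≠ 0) (hv : v ≠ 0) (hE : E ≠ 0) (hs : E - E⁻¹ ≠ 0) (hs2 : E ^ 2 - 1 ≠ 0) :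
    p / (v * ((E - E⁻¹) / 2)) * (E⁻¹ / (2 * p)) * v ^ 2 * (E ^ 2 - 1) = v := by
  have hD : E - E⁻¹ = (E ^ 2 - 1) / E := by field_simp
  rw [hD]
  field_simp

/-- With ν = (1/2π)ln(1+ρρ†) and
β₁₂ = (Γ(-iν)/√(2π)) e^{iπ/4 - πν/2} ν ρ, one has β₁₂β₁₂† = ν. -/
theorem stmt19 (ρ : Matrix (Fin 1) (Fin 3) ℂ)
    (ν : ℝ) (hν : ν = (1 / (2 * Real.pi)) * Real.log (1 + ((ρ * ρᴴ) 0 0).re))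
    (β₁₂ : Matrix (Fin 1) (Fin 3) ℂ)
    (hβ : β₁₂ = ((Complex.Gamma (-(I * (ν : ℂ))) / (Real.sqrt (2 * Real.pi) : ℂ)) *
      Complex.exp (I * Real.pi / 4 - Real.pi * ν / 2) * (ν : ℂ)) • ρ) :
    (β₁₂ * β₁₂ᴴ) 0 0 = (ν : ℂ) := by
  set c : ℂ := (Complex.Gamma (-(I * (ν : ℂ))) / (Real.sqrt (2 * Real.pi) : ℂ)) *
      Complex.exp (I * Real.pi / 4 - Real.pi * ν / 2) * (ν : ℂ) with hc
  have hRentry : (ρ * ρᴴ) 0 0 = ((∑ j, Complex.normSq (ρ 0 j) : ℝ) : ℂ) := by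
    simp [Matrix.mul_apply, Matrix.conjTranspose_apply, Complex.mul_conj]
  set R : ℝ := ∑ j, Complex.normSq (ρ 0 j) with hRdef
  have hR0 : 0 ≤ R := Finset.sum_nonneg fun j _ => Complex.normSq_nonneg _
  have hRre : ((ρ * ρᴴ) 0 0).re = R := by rw [hRentry]; simp
  rw [hRre] at hν
  have hmain : (β₁₂ * β₁₂ᴴ) 0 0 = (c * (starRingEnd ℂ) c) * R := by
    rw [hβ, Matrix.conjTranspose_smul, Matrix.smul_mul, Matrix.mul_smul, smul_smul]
    simp [hRentry, mul_comm]
  rw [hmain]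
  rcases eq_or_lt_of_le hR0 with h0 | hpos
  · have hν0 : ν = 0 := by rw [hν, ← h0]; simp
    rw [hν0]; simp [hc, hν0]
  · have hπ : (0:ℝ) < Real.pi := Real.pi_pos
    have hνpos : 0 < ν := by
      rw [hν]
      have := Real.log_pos (by linarith : (1:ℝ) < 1 + R)
      positivity
    have hν' : (ν:ℂ) ≠ 0 := by exact_mod_cast hνpos.ne'
    have hexp2 : (Real.exp (Real.pi * ν))^2 = 1 + R := by
      rw [← Real.exp_nat_mul]
      rw [show ((2:ℕ):ℝ) * (Real.pi * ν) = Real.log (1 + R) by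
        rw [hν]; push_cast; field_simp]
      exact Real.exp_log (by linarith)
    have hne : -(I * (ν:ℂ)) ≠ 0 := by simpa using hν'
    have hsinh : Complex.sinh ((Real.pi:ℂ) * ν) = (Real.sinh (Real.pi * ν) : ℂ) := by
      push_cast [Complex.ofReal_sinh]; ring_nf
    have hsinhpos : 0 < Real.sinh (Real.pi * ν) := Real.sinh_pos_iff.2 (by positivity)
    have hsinhne : Complex.sinh ((Real.pi:ℂ) * ν) ≠ 0 := by
      rw [hsinh]; exact_mod_cast hsinhpos.ne'
    have hGG : Complex.Gamma (-(I * (ν:ℂ))) * Complex.Gamma (I * (ν:ℂ)) =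
        (Real.pi : ℂ) / ((ν:ℂ) * Complex.sinh ((Real.pi:ℂ) * ν)) := by
      have h1 := Complex.Gamma_mul_Gamma_one_sub (I * (ν:ℂ))
      have h2 : Complex.Gamma (1 - I * (ν:ℂ)) = (-(I * (ν:ℂ))) * Complex.Gamma (-(I * (ν:ℂ))) := by
        rw [show (1 : ℂ) - I * ν = -(I * ν) + 1 by ring, Complex.Gamma_add_one _ hne]
      have h3 : Complex.sin ((Real.pi:ℂ) * (I * ν)) = Complex.sinh ((Real.pi:ℂ) * ν) * I := by
        rw [show (Real.pi:ℂ) * (I * ν) = ((Real.pi:ℂ) * ν) * I by ring, Complex.sin_mul_I]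
      rw [h2, h3] at h1
      field_simp at h1
      have hs : Complex.sinh ((ν:ℂ) * (Real.pi:ℂ)) ≠ 0 := by rw [mul_comm]; exact hsinhne
      rw [eq_div_iff hs, mul_comm (ν:ℂ) (Real.pi:ℂ)] at h1
      rw [eq_div_iff (mul_ne_zero hν' hsinhne)]
      linear_combination h1 + (Complex.Gamma (I*(ν:ℂ)) * Complex.Gamma (-(I*(ν:ℂ))) *
        Complex.sinh ((Real.pi:ℂ)*ν) * (ν:ℂ)) * Complex.I_sq
    have hconj : (starRingEnd ℂ) c = Complex.Gamma (I * (ν:ℂ)) / (Real.sqrt (2 * Real.pi) : ℂ) *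
        Complex.exp (-(I * (Real.pi:ℂ) / 4) - (Real.pi:ℂ) * ν / 2) * (ν : ℂ) := by
      rw [hc]
      simp only [_root_.map_mul, map_div₀, ← Complex.Gamma_conj, ← Complex.exp_conj, map_sub, map_neg,
        Complex.conj_ofReal, Complex.conj_I, _root_.map_one, map_ofNat]
      ring_nf
    have hsq : ((Real.sqrt (2 * Real.pi) : ℂ)) * ((Real.sqrt (2 * Real.pi) : ℂ)) = ((2 * Real.pi : ℝ) : ℂ) := by
      rw [← Complex.ofReal_mul, Real.mul_self_sqrt (by positivity)]
    have hexpprod : Complex.exp (I * (Real.pi:ℂ) / 4 - (Real.pi:ℂ) * ν / 2) *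
        Complex.exp (-(I * (Real.pi:ℂ) / 4) - (Real.pi:ℂ) * ν / 2) = ((Real.exp (-(Real.pi * ν)) : ℝ) : ℂ) := by
      rw [← Complex.exp_add, Complex.ofReal_exp]
      congr 1
      push_cast
      ring
    have hsqrtne : ((Real.sqrt (2 * Real.pi) : ℂ)) ≠ 0 := by
      exact_mod_cast (Real.sqrt_pos.2 (by positivity)).ne'
    have hkey : c * (starRingEnd ℂ) c =
        (((Real.pi / (ν * Real.sinh (Real.pi * ν)) * (Real.exp (-(Real.pi * ν)) / (2 * Real.pi)) * ν^2) : ℝ) : ℂ) := by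
      rw [hconj, hc]
      calc (Complex.Gamma (-(I * (ν : ℂ))) / (Real.sqrt (2 * Real.pi) : ℂ) *
              Complex.exp (I * Real.pi / 4 - Real.pi * ν / 2) * (ν : ℂ)) *
            (Complex.Gamma (I * (ν:ℂ)) / (Real.sqrt (2 * Real.pi) : ℂ) *
              Complex.exp (-(I * (Real.pi:ℂ) / 4) - (Real.pi:ℂ) * ν / 2) * (ν : ℂ))
          = (Complex.Gamma (-(I * (ν : ℂ))) * Complex.Gamma (I * (ν:ℂ))) *
            (Complex.exp (I * (Real.pi:ℂ) / 4 - (Real.pi:ℂ) * ν / 2) *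
             Complex.exp (-(I * (Real.pi:ℂ) / 4) - (Real.pi:ℂ) * ν / 2)) * (ν:ℂ)^2 /
            ((Real.sqrt (2 * Real.pi) : ℂ) * (Real.sqrt (2 * Real.pi) : ℂ)) := by
            field_simp
        _ = _ := by
            rw [hGG, hexpprod, hsq, hsinh]
            push_cast
            have hπ' : (Real.pi : ℂ) ≠ 0 := by exact_mod_cast hπ.ne'
            have hs' : (Real.sinh (Real.pi * ν) : ℂ) ≠ 0 := by exact_mod_cast hsinhpos.ne'
            field_simp
    rw [hkey]
    rw [← Complex.ofReal_mul]
    rw [show (ν:ℂ) = ((ν:ℝ):ℂ) from rfl]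
    congr 1
    have hE : Real.exp (-(Real.pi * ν)) = (Real.exp (Real.pi * ν))⁻¹ := by
      rw [Real.exp_neg]
    have hsinheq : Real.sinh (Real.pi * ν) =
        (Real.exp (Real.pi * ν) - (Real.exp (Real.pi * ν))⁻¹) / 2 := by
      rw [Real.sinh_eq, Real.exp_neg]
    set E := Real.exp (Real.pi * ν) with hEdef
    have hE1 : 1 < E := by
      have := Real.exp_lt_exp.2 (show (0:ℝ) < Real.pi * ν by positivity)
      simpa [hEdef] using this
    have hEne : E ≠ 0 := by positivity
    have hsne : E - E⁻¹ ≠ 0 := by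
      have : E⁻¹ < 1 := by
        rw [inv_lt_one_iff₀]; right; exact hE1
      intro h; nlinarith
    have hR' : R = E^2 - 1 := by linarith [hexp2]
    rw [hsinheq, hE, hR']
    exact stmt19_aux _ _ _ hπ.ne' hνpos.ne' hEne hsne (by rw [← hR']; exact hpos.ne')
end
end
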